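/- Let X ⊆ ℝ^n be a set, f : ℝ^n → ℝ, A a q×n real matrix, b ∈ ℝ^q, and g : ℝ^n → ℝ^p. Define the value function v(c₁, c₂) = inf { f(x) : x ∈ X, Ax − b + c₁ ≤ 0, g(x) + c₂ ≤ 0 } for (c₁, c₂) ∈ ℝ^q × ℝ^p, and the dual function θ(λ, μ) = inf { f(x) + λᵀ(Ax − b) + μᵀ g(x) : x ∈ X }. Then for every (λ, μ) ∈ ℝ₊^q × ℝ₊^p (componentwise nonnegative), the Fenchel conjugate of v satisfies v*(λ, μ) = −θ(λ, μ) (equality of extended reals). -/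

import Mathlib

/-!
Since `a - ⨅ᵢ yᵢ = ⨆ᵢ (a - yᵢ)` in `EReal` for real `a`, the conjugate becomes a supremum over
pairs `(c, x)` with `x ∈ X` feasible for the perturbation `c`. For fixed `x` the feasible
perturbations are exactly `c ≤ (b - A x, -g x)`, and since `λ, μ ≥ 0` the linear term is
maximised at that corner, where `λᵀc₁ + μᵀc₂ - f x` is minus the Lagrangian at `x`.
-/

open scoped Matrix

theorem EReal.coe_sub_le_comm {a : ℝ} {y z : EReal} :
    (a : EReal) - y ≤ z ↔ (a : EReal) - z ≤ y := by
  induction y using EReal.rec <;> induction z using EReal.rec <;>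
    simp [← EReal.coe_sub, add_comm]

theorem EReal.coe_sub_iInf {ι : Sort*} (a : ℝ) (f : ι → EReal) :
    (a : EReal) - ⨅ i, f i = ⨆ i, ((a : EReal) - f i) :=
  le_antisymm
    (EReal.coe_sub_le_comm.1 <| le_iInf fun i =>
      EReal.coe_sub_le_comm.1 <| le_iSup (fun i => (a : EReal) - f i) i)
    (iSup_le fun i => EReal.sub_le_sub le_rfl (iInf_le f i))

theorem EReal.neg_iInf {ι : Sort*} (f : ι → EReal) : -(⨅ i, f i) = ⨆ i, -f i :=
  EReal.negOrderIso.map_iInf f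

theorem iSup_coe_sub_iInf_eq_biSup_of_maximal {ι α : Type*} (X : Set α) (F : ι → α → Prop)
    (φ : ι → ℝ) (f : α → ℝ) (d : α → ι) (hd : ∀ x ∈ X, F (d x) x)
    (hφ : ∀ c, ∀ x ∈ X, F c x → φ c ≤ φ (d x)) :
    ⨆ c, (φ c : EReal) - ⨅ (x) (_ : x ∈ X) (_ : F c x), (f x : EReal) =
      ⨆ x ∈ X, ((φ (d x) - f x : ℝ) : EReal) := by
  simp only [EReal.coe_sub_iInf, ← EReal.coe_sub]
  refine le_antisymm (iSup_le fun c => iSup₂_le fun x hx => iSup_le fun hF => ?_)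
    (iSup₂_le fun x hx => ?_)
  · exact le_iSup₂_of_le x hx <| EReal.coe_le_coe_iff.2 <| by linarith [hφ c x hx hF]
  · exact le_iSup_of_le (d x) <| le_iSup₂_of_le x hx <| le_iSup_of_le (hd x hx) le_rfl

theorem conjugate_of_value_function_eq_neg_dual
    {n q p : ℕ} (X : Set (Fin n → ℝ)) (f : (Fin n → ℝ) → ℝ)
    (A : Matrix (Fin q) (Fin n) ℝ) (b : Fin q → ℝ)
    (g : (Fin n → ℝ) → Fin p → ℝ)
    (lam : Fin q → ℝ) (μ : Fin p → ℝ)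
    (hlam : ∀ i, 0 ≤ lam i) (hμ : ∀ j, 0 ≤ μ j) :
    (⨆ c : (Fin q → ℝ) × (Fin p → ℝ),
        ((lam ⬝ᵥ c.1 + μ ⬝ᵥ c.2 : ℝ) : EReal)
          - ⨅ (x : Fin n → ℝ) (_ : x ∈ X)
              (_ : ∀ i, A.mulVec x i - b i + c.1 i ≤ 0)
              (_ : ∀ j, g x j + c.2 j ≤ 0), ((f x : ℝ) : EReal)) =
      -(⨅ (x : Fin n → ℝ) (_ : x ∈ X),
          ((f x + lam ⬝ᵥ (A.mulVec x - b) + μ ⬝ᵥ g x : ℝ) : EReal)) := by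
  have key := iSup_coe_sub_iInf_eq_biSup_of_maximal X
    (fun (c : (Fin q → ℝ) × (Fin p → ℝ)) x =>
      (∀ i, A.mulVec x i - b i + c.1 i ≤ 0) ∧ ∀ j, g x j + c.2 j ≤ 0)
    (fun c => lam ⬝ᵥ c.1 + μ ⬝ᵥ c.2) f (fun x => (b - A.mulVec x, -g x))
    (fun x _ => ⟨fun i => by simp, fun j => by simp⟩)
    (fun c x _ ⟨h₁, h₂⟩ => add_le_add
      (dotProduct_le_dotProduct_of_nonneg_left (fun i => by dsimp; linarith [h₁ i]) hlam)
      (dotProduct_le_dotProduct_of_nonneg_left (fun j => by dsimp; linarith [h₂ j]) hμ))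
  simp only [iInf_and] at key
  simp only [key, EReal.neg_iInf, ← EReal.coe_neg, ← neg_sub (A *ᵥ _) b, dotProduct_neg]
  congr! 4
  ring
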